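/- For any well-tempered scoring game G, R(G - G) ≥ 0 and L(G - G) ≤ 0, where -G denotes the negation of G. -/

import Mathlib

/-- Well-tempered scoring game trees: an integer (final score) or a position
with lists of Left and Right options. -/
inductive WT : Type where
  | int : ℤ → WT
  | node : List WT → List WT → WT

namespace WT

/-- Left options. -/
def lopts : WT → List WT
  | int _ => []
  | node L _ => L

/-- Right options. -/
def ropts : WT → List WT
  | int _ => []
  | node _ R => R

theorem sizeOf_lt_of_mem_lopts : ∀ {G g : WT}, g ∈ G.lopts → sizeOf g < sizeOf G := by
  intro G g h
  cases G with
  | int n => simp [lopts] at h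
  | node L R =>
    simp only [lopts] at h
    have h1 := List.sizeOf_lt_of_mem h
    have h2 : sizeOf (WT.node L R) = 1 + sizeOf L + sizeOf R := by simp
    omega

theorem sizeOf_lt_of_mem_ropts : ∀ {G g : WT}, g ∈ G.ropts → sizeOf g < sizeOf G := by
  intro G g h
  cases G with
  | int n => simp [ropts] at h
  | node L R =>
    simp only [ropts] at h
    have h1 := List.sizeOf_lt_of_mem h
    have h2 : sizeOf (WT.node L R) = 1 + sizeOf L + sizeOf R := by simp
    omega

/-- Disjunctive sum of two games. -/
def add (G H : WT) : WT :=
  match G, H with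
  | int m, int n => int (m + n)
  | G, H =>
    node ((G.lopts.attach.map fun g => add g.1 H) ++ (H.lopts.attach.map fun h => add G h.1))
         ((G.ropts.attach.map fun g => add g.1 H) ++ (H.ropts.attach.map fun h => add G h.1))
termination_by sizeOf G + sizeOf H
decreasing_by
  all_goals
    first
      | (have := sizeOf_lt_of_mem_lopts g.2; omega)
      | (have := sizeOf_lt_of_mem_lopts h.2; omega)
      | (have := sizeOf_lt_of_mem_ropts g.2; omega)
      | (have := sizeOf_lt_of_mem_ropts h.2; omega)

/-- Negation of a game: swap players and negate scores. -/
def neg : WT → WT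
  | int n => int (-n)
  | node L R =>
    node ((WT.node L R).ropts.attach.map fun g => neg g.1)
         ((WT.node L R).lopts.attach.map fun g => neg g.1)
termination_by G => sizeOf G
decreasing_by
  all_goals
    first
      | exact sizeOf_lt_of_mem_lopts g.2
      | exact sizeOf_lt_of_mem_ropts g.2

def lmax : List ℤ → ℤ
  | [] => 0
  | x :: xs => xs.foldl max x

def lmin : List ℤ → ℤ
  | [] => 0
  | x :: xs => xs.foldl min x

/-- The pair (left outcome, right outcome). -/
def out : WT → ℤ × ℤ
  | int n => (n, n)
  | node L R =>
    (lmax ((WT.node L R).lopts.attach.map fun g => (out g.1).2),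
     lmin ((WT.node L R).ropts.attach.map fun g => (out g.1).1))
termination_by G => sizeOf G
decreasing_by
  all_goals
    first
      | exact sizeOf_lt_of_mem_lopts g.2
      | exact sizeOf_lt_of_mem_ropts g.2

/-- Left outcome L(G): optimal score when Left moves first. -/
def Lout (G : WT) : ℤ := G.out.1

/-- Right outcome R(G): optimal score when Right moves first. -/
def Rout (G : WT) : ℤ := G.out.2

/-- `IsWT G p` : `G` is a well-tempered game of parity `p`
(`false` = even-tempered, `true` = odd-tempered). -/
inductive IsWT : WT → Bool → Prop where
  | int (n : ℤ) : IsWT (WT.int n) false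
  | node {L R : List WT} {p : Bool} (hL : L ≠ []) (hR : R ≠ [])
      (hLp : ∀ g ∈ L, IsWT g p) (hRp : ∀ g ∈ R, IsWT g p) :
      IsWT (WT.node L R) (!p)

/-- `G` is a well-tempered game (of some parity). -/
def Wt (G : WT) : Prop := ∃ p, IsWT G p

/-- Parity, computed structurally (`false` = even-tempered, `true` = odd-tempered;
agrees with `IsWT` on well-tempered games). -/
def par : WT → Bool
  | int _ => false
  | node [] _ => true
  | node (g :: _) _ => !(par g)

/-- Final score under optimal play when Left moves last. -/
def Lf (G : WT) : ℤ := if G.par then G.Lout else G.Rout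

/-- Final score under optimal play when Right moves last. -/
def Rf (G : WT) : ℤ := if G.par then G.Rout else G.Lout

/-- `G ≲ H` : for every well-tempered `X`, `L(G+X) ≤ L(H+X)` and `R(G+X) ≤ R(H+X)`. -/
def Le (G H : WT) : Prop :=
  ∀ X : WT, X.Wt → (G.add X).Lout ≤ (H.add X).Lout ∧ (G.add X).Rout ≤ (H.add X).Rout

/-- `G ≳ H`. -/
def Ge (G H : WT) : Prop := Le H G

/-- `G ≈ H` : equivalence of scoring games. -/
def Equiv (G H : WT) : Prop :=
  ∀ X : WT, X.Wt → (G.add X).Lout = (H.add X).Lout ∧ (G.add X).Rout = (H.add X).Rout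

/-- `G` and `H` are well-tempered with the same parity. -/
def SamePar (G H : WT) : Prop := ∃ p, IsWT G p ∧ IsWT H p

/-- `G` takes values in `S`: every integer subgame lies in `S`. -/
inductive Valued (S : Set ℤ) : WT → Prop where
  | int {n : ℤ} : n ∈ S → Valued S (WT.int n)
  | node {L R : List WT} : (∀ g ∈ L, Valued S g) → (∀ g ∈ R, Valued S g) →
      Valued S (WT.node L R)

/-- `Subgame H G` : `H` is a subgame of `G`. -/
inductive Subgame : WT → WT → Prop where
  | refl (G : WT) : Subgame G G
  | left {H G' : WT} {L R : List WT} : G' ∈ L → Subgame H G' → Subgame H (WT.node L R)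
  | right {H G' : WT} {L R : List WT} : G' ∈ R → Subgame H G' → Subgame H (WT.node L R)

/-- `gap G p` : supremum of `R(H) - L(H)` over subgames `H` of `G` of parity `p`
(as an element of `WithBot ℤ`; the supremum of the empty set is `⊥ = -∞`). -/
noncomputable def gap (G : WT) (p : Bool) : WithBot ℤ :=
  sSup {x : WithBot ℤ | ∃ H : WT, Subgame H G ∧ IsWT H p ∧ x = ((H.Rout - H.Lout : ℤ) : WithBot ℤ)}

/-- Heating by `t`. -/
def heat (t : ℤ) : WT → WT
  | int n => int n
  | node L R =>
    node ((WT.node L R).lopts.attach.map fun g => (WT.int t).add (heat t g.1))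
         ((WT.node L R).ropts.attach.map fun g => (WT.int (-t)).add (heat t g.1))
termination_by G => sizeOf G
decreasing_by
  all_goals
    first
      | exact sizeOf_lt_of_mem_lopts g.2
      | exact sizeOf_lt_of_mem_ropts g.2

end WT

/-! The mirror (Tweedledum–Tweedledee) strategy. In `G - G`, whichever move the opponent makes
in one component, the other player copies it in the other component and reaches a position
`g - g` with the opponent again to move. By induction on `G` this guarantees Left a score
`≥ 0` when Right starts and Right a score `≤ 0` when Left starts; the only integer `G - G`
can be is `0`. -/

namespace WT

theorem lmax_eq_max {l : List ℤ} (hl : l ≠ []) : lmax l = l.max hl := by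
  cases l with
  | nil => contradiction
  | cons x xs => rfl

theorem lmin_eq_min {l : List ℤ} (hl : l ≠ []) : lmin l = l.min hl := by
  cases l with
  | nil => contradiction
  | cons x xs => rfl

theorem le_lmax_of_mem {l : List ℤ} {x : ℤ} (hx : x ∈ l) : x ≤ lmax l :=
  lmax_eq_max (List.ne_nil_of_mem hx) ▸ List.le_max_of_mem hx

theorem lmin_le_of_mem {l : List ℤ} {x : ℤ} (hx : x ∈ l) : lmin l ≤ x :=
  lmin_eq_min (List.ne_nil_of_mem hx) ▸ List.min_le_of_mem hx

theorem lmax_nonpos {l : List ℤ} (h : ∀ x ∈ l, x ≤ 0) : lmax l ≤ 0 := by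
  rcases eq_or_ne l [] with rfl | hl
  · rfl
  · exact lmax_eq_max hl ▸ (List.max_le_iff hl).2 h

theorem lmin_nonneg {l : List ℤ} (h : ∀ x ∈ l, 0 ≤ x) : 0 ≤ lmin l := by
  rcases eq_or_ne l [] with rfl | hl
  · rfl
  · exact lmin_eq_min hl ▸ (List.le_min_iff hl).2 h

theorem moveInduction {P : WT → Prop}
    (step : ∀ G, (∀ g ∈ G.lopts, P g) → (∀ g ∈ G.ropts, P g) → P G) (G : WT) : P G :=
  step G (fun g _ => moveInduction step g) (fun g _ => moveInduction step g)
termination_by sizeOf G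
decreasing_by
  · exact sizeOf_lt_of_mem_lopts ‹_›
  · exact sizeOf_lt_of_mem_ropts ‹_›

theorem Lout_node (L R : List WT) : (node L R).Lout = lmax (L.map Rout) := by
  rw [Lout, out]
  exact congrArg lmax (List.attach_map_val (f := Rout))

theorem Rout_node (L R : List WT) : (node L R).Rout = lmin (R.map Lout) := by
  rw [Rout, out]
  exact congrArg lmin (List.attach_map_val (f := Lout))

theorem Rout_le_Lout_of_mem_lopts {G g : WT} (hg : g ∈ G.lopts) : g.Rout ≤ G.Lout := by
  cases G with
  | int n => simp [lopts] at hg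
  | node L R => exact Lout_node L R ▸ le_lmax_of_mem (List.mem_map_of_mem hg)

theorem Rout_le_Lout_of_mem_ropts {G g : WT} (hg : g ∈ G.ropts) : G.Rout ≤ g.Lout := by
  cases G with
  | int n => simp [ropts] at hg
  | node L R => exact Rout_node L R ▸ lmin_le_of_mem (List.mem_map_of_mem hg)

theorem add_int_int (m n : ℤ) : (int m).add (int n) = int (m + n) := by
  rw [add]

theorem neg_int (n : ℤ) : (int n).neg = int (-n) := by
  rw [neg]

theorem lopts_neg (G : WT) : G.neg.lopts = G.ropts.map neg := by
  cases G with
  | int n => rw [neg_int]; rfl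
  | node L R => rw [neg]; simp [lopts, ropts]

theorem ropts_neg (G : WT) : G.neg.ropts = G.lopts.map neg := by
  cases G with
  | int n => rw [neg_int]; rfl
  | node L R => rw [neg]; simp [lopts, ropts]

theorem add_eq_node_of_ne_int {G H : WT} (h : ∀ m n, G = int m → H = int n → False) :
    G.add H = node (G.lopts.map (·.add H) ++ H.lopts.map (G.add ·))
      (G.ropts.map (·.add H) ++ H.ropts.map (G.add ·)) := by
  rw [add]
  · simp
  · exact h

theorem lopts_add (G H : WT) :
    (G.add H).lopts = G.lopts.map (·.add H) ++ H.lopts.map (G.add ·) := by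
  by_cases h : ∃ m n, G = int m ∧ H = int n
  · obtain ⟨m, n, rfl, rfl⟩ := h
    rw [add_int_int]; rfl
  · rw [add_eq_node_of_ne_int fun m n hG hH => h ⟨m, n, hG, hH⟩]; rfl

theorem ropts_add (G H : WT) :
    (G.add H).ropts = G.ropts.map (·.add H) ++ H.ropts.map (G.add ·) := by
  by_cases h : ∃ m n, G = int m ∧ H = int n
  · obtain ⟨m, n, rfl, rfl⟩ := h
    rw [add_int_int]; rfl
  · rw [add_eq_node_of_ne_int fun m n hG hH => h ⟨m, n, hG, hH⟩]; rfl

theorem zero_le_Rout {G : WT} (hint : ∀ n, G = int n → 0 ≤ n)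
    (h : ∀ g ∈ G.ropts, 0 ≤ g.Lout) : 0 ≤ G.Rout := by
  cases G with
  | int n => rw [Rout, out]; exact hint n rfl
  | node L R => exact Rout_node L R ▸ lmin_nonneg (by simpa [ropts] using h)

theorem Lout_nonpos {G : WT} (hint : ∀ n, G = int n → n ≤ 0)
    (h : ∀ g ∈ G.lopts, g.Rout ≤ 0) : G.Lout ≤ 0 := by
  cases G with
  | int n => rw [Lout, out]; exact hint n rfl
  | node L R => exact Lout_node L R ▸ lmax_nonpos (by simpa [lopts] using h)

theorem eq_zero_of_add_neg_eq_int {G : WT} {n : ℤ} (h : G.add G.neg = int n) : n = 0 := by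
  cases G with
  | int m =>
    rw [neg_int, add_int_int, int.injEq] at h
    omega
  | node L R =>
    rw [add_eq_node_of_ne_int fun _ _ hG _ => by cases hG] at h
    cases h

theorem mem_lopts_add_neg_of_mem_ropts {G g : WT} (hg : g ∈ G.ropts) :
    g.add g.neg ∈ (g.add G.neg).lopts := by
  simp only [lopts_add, lopts_neg, List.mem_append, List.mem_map]
  exact Or.inr ⟨g.neg, ⟨g, hg, rfl⟩, rfl⟩

theorem mem_lopts_add_neg_of_mem_lopts {G g : WT} (hg : g ∈ G.lopts) :
    g.add g.neg ∈ (G.add g.neg).lopts := by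
  simp only [lopts_add, List.mem_append, List.mem_map]
  exact Or.inl ⟨g, hg, rfl⟩

theorem mem_ropts_add_neg_of_mem_lopts {G g : WT} (hg : g ∈ G.lopts) :
    g.add g.neg ∈ (g.add G.neg).ropts := by
  simp only [ropts_add, ropts_neg, List.mem_append, List.mem_map]
  exact Or.inr ⟨g.neg, ⟨g, hg, rfl⟩, rfl⟩

theorem mem_ropts_add_neg_of_mem_ropts {G g : WT} (hg : g ∈ G.ropts) :
    g.add g.neg ∈ (G.add g.neg).ropts := by
  simp only [ropts_add, List.mem_append, List.mem_map]
  exact Or.inl ⟨g, hg, rfl⟩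

end WT

theorem mirror_outcomes_general (G : WT) :
    0 ≤ (G.add G.neg).Rout ∧ (G.add G.neg).Lout ≤ 0 := by
  induction G using WT.moveInduction with
  | step G ihL ihR =>
  constructor
  · refine WT.zero_le_Rout (fun n h => (WT.eq_zero_of_add_neg_eq_int h).ge) ?_
    simp only [WT.ropts_add, WT.ropts_neg, List.mem_append, List.mem_map]
    rintro _ (⟨g, hg, rfl⟩ | ⟨_, ⟨g, hg, rfl⟩, rfl⟩)
    · exact (ihR g hg).1.trans
        (WT.Rout_le_Lout_of_mem_lopts (WT.mem_lopts_add_neg_of_mem_ropts hg))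
    · exact (ihL g hg).1.trans
        (WT.Rout_le_Lout_of_mem_lopts (WT.mem_lopts_add_neg_of_mem_lopts hg))
  · refine WT.Lout_nonpos (fun n h => (WT.eq_zero_of_add_neg_eq_int h).le) ?_
    simp only [WT.lopts_add, WT.lopts_neg, List.mem_append, List.mem_map]
    rintro _ (⟨g, hg, rfl⟩ | ⟨_, ⟨g, hg, rfl⟩, rfl⟩)
    · exact (WT.Rout_le_Lout_of_mem_ropts (WT.mem_ropts_add_neg_of_mem_lopts hg)).trans
        (ihL g hg).2
    · exact (WT.Rout_le_Lout_of_mem_ropts (WT.mem_ropts_add_neg_of_mem_ropts hg)).trans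
        (ihR g hg).2

/-- R(G - G) ≥ 0 and L(G - G) ≤ 0. -/
theorem mirror_outcomes (G : WT) (hG : G.Wt) :
    0 ≤ (G.add G.neg).Rout ∧ (G.add G.neg).Lout ≤ 0 :=
  mirror_outcomes_general G
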